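/- If a C^{1+bv} action of Z^d on [0,1] has no parabolic global fixed point in the open interval (0,1), then all the elements of its image group other than the identity have exactly the same set of fixed points. -/

import Mathlib

open Set MeasureTheory Filter Topology

noncomputable section

/-- An orientation-preserving `C¹` diffeomorphism of the interval `[0,1]`, recorded together
with its derivative, and extended by the identity outside of `[0,1]`. -/
structure C1Diffeo : Type where
  toFun : ℝ → ℝ
  derivFun : ℝ → ℝ
  map_zero : toFun 0 = 0
  map_one : toFun 1 = 1
  fixes_outside : ∀ x : ℝ, x ∉ Icc (0:ℝ) 1 → toFun x = x
  bijOn : BijOn toFun (Icc (0:ℝ) 1) (Icc (0:ℝ) 1)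
  hasDeriv : ∀ x ∈ Icc (0:ℝ) 1, HasDerivWithinAt toFun (derivFun x) (Icc (0:ℝ) 1) x
  derivFun_cont : ContinuousOn derivFun (Icc (0:ℝ) 1)
  derivFun_pos : ∀ x ∈ Icc (0:ℝ) 1, 0 < derivFun x

/-- A `C^{1+bv}` diffeomorphism of `[0,1]`: a `C¹` diffeomorphism such that `log Df` has
finite total variation. -/
structure C1bvDiffeo extends C1Diffeo where
  logDeriv_bv : BoundedVariationOn (fun x => Real.log (derivFun x)) (Icc (0:ℝ) 1)

/-- An action of `ℤᵈ` on `[0,1]` by orientation-preserving `C^{1+bv}` diffeomorphisms. -/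
structure ZdAction1bv (d : ℕ) where
  elt : (Fin d → ℤ) → C1bvDiffeo
  elt_add : ∀ a b : Fin d → ℤ, ∀ x : ℝ,
    (elt (a + b)).toFun x = (elt a).toFun ((elt b).toFun x)
  elt_zero : ∀ x : ℝ, (elt 0).toFun x = x

/-- `Φ`, together with its spatial derivative `Φ'`, is a `C¹` flow on the one-dimensional
manifold-with-boundary `s ⊆ ℝ` (extended by the identity outside of `s`): a continuous group
homomorphism from `(ℝ,+)` to the orientation-preserving `C¹` diffeomorphisms of `s` endowed
with the `C¹` topology. -/
def IsC1FlowOn (s : Set ℝ) (Φ Φ' : ℝ → ℝ → ℝ) : Prop :=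
  (∀ x : ℝ, Φ 0 x = x) ∧
  (∀ t u : ℝ, ∀ x : ℝ, Φ (t + u) x = Φ t (Φ u x)) ∧
  (∀ t : ℝ, ∀ x ∉ s, Φ t x = x) ∧
  (∀ t : ℝ, BijOn (Φ t) s s) ∧
  (∀ t : ℝ, ∀ x ∈ s, HasDerivWithinAt (Φ t) (Φ' t x) s x) ∧
  (∀ t : ℝ, ContinuousOn (Φ' t) s) ∧
  (∀ t : ℝ, ∀ x ∈ s, 0 < Φ' t x) ∧
  (∀ t₀ : ℝ, ∀ K : Set ℝ, IsCompact K → K ⊆ s → ∀ ε > (0:ℝ), ∃ δ > (0:ℝ), ∀ t : ℝ,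
    |t - t₀| < δ → ∀ x ∈ K,
      |Φ t x - Φ t₀ x| + |Real.log (Φ' t x) - Real.log (Φ' t₀ x)| < ε)


/-!
For nontrivial elements `a` and `b` it suffices to show that every fixed point of `a` is fixed by
`b`; suppose `a` fixes a point `x` that `b` moves.

The tool is a distortion estimate. Let `c` contract `(P, B]` towards its fixed point `P` and let
`e` commute with `c`. The chain rule for `e cⁿ = cⁿ e` writes `log D e (cⁿ y) - log D e (y)` as a
sum of increments of `log D c` between `cⁱ y` and `cⁱ (e y)`. When `y` and `e y` lie in `[c B, B]`
these pairs lie in the non-overlapping intervals `cⁱ [c B, B]`, so letting `n → ∞` bounds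
`|log D e (y) - log D e (P)|` by the variation of `log D c` on `[P, B]`.

This gives Kopell's lemma: if `a` fixes a point of a component `(u, v)` of the support of `b`,
then `a` is the identity on `[u, v]`. Otherwise some component of the support of `a` lies in a
fundamental domain of `b^{±1}`; the fixed points of `a` accumulate at `u`, so `D (aᵐ) (u) = 1`, and
the estimate keeps `D (aᵐ)` away from `0` on that component although `aᵐ` squeezes it onto an
endpoint.

Hence `a` is the identity near `x`. Up to the reflection `x ↦ 1 - x`, let `p` be the first point to
the right of `x` moved by `a`: then `a p = p`, `D a (p) = 1`, and `a` is nontrivial on every right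
neighbourhood of `p`. If some element moves `p`, Kopell's lemma on its component through `p`
contradicts this. Otherwise, since `p` is not parabolic, some `c` has `D c (p) < 1`, and by
Kopell's lemma `a` has no fixed point on the component `(p, v)` of the support of `c`. A second
distortion argument rules this out: for large `k` some `c⁻ᵏ aᵐ` maps `[c x, x]` into `[c² x, x]`,
although its derivative at `p` is `(D c (p))⁻ᵏ`.
-/

open Function

theorem HasDerivWithinAt.eq_one_of_frequently_isFixedPt {f : ℝ → ℝ} {f' p : ℝ} {s : Set ℝ}
    (hf : HasDerivWithinAt f f' s p) (hp : IsFixedPt f p)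
    (h : ∃ᶠ y in 𝓝[s \ {p}] p, IsFixedPt f y) : f' = 1 := by
  refine tendsto_nhds_unique_of_frequently_eq (hasDerivWithinAt_iff_tendsto_slope.1 hf)
    tendsto_const_nhds ?_
  refine (h.and_eventually self_mem_nhdsWithin).mono fun y ⟨hy, hys⟩ => ?_
  rw [slope_def_field, hy.eq, hp.eq, div_self (sub_ne_zero.2 hys.2)]

theorem HasDerivWithinAt.eventually_lt {f g : ℝ → ℝ} {f' g' p : ℝ}
    (hf : HasDerivWithinAt f f' (Ioi p) p) (hg : HasDerivWithinAt g g' (Ioi p) p)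
    (hfg : f p = g p) (h : f' < g') : ∀ᶠ y in 𝓝[>] p, f y < g y := by
  have hslope := hasDerivWithinAt_iff_tendsto_slope.1 (hf.sub hg)
  rw [sdiff_singleton_eq_self self_notMem_Ioi] at hslope
  filter_upwards [hslope.eventually (gt_mem_nhds (sub_neg.2 h)), self_mem_nhdsWithin]
    with y hy hyp
  simp only [slope_def_field, Pi.sub_apply, hfg, sub_self, sub_zero, div_neg_iff] at hy
  rcases hy with ⟨-, hy⟩ | ⟨hy, -⟩
  · exact absurd hy (not_lt.2 (sub_nonneg.2 (le_of_lt hyp)))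
  · exact sub_neg.1 hy

theorem IsPreconnected.forall_lt_or_forall_gt {X α : Type*} [TopologicalSpace X]
    [LinearOrder α] [TopologicalSpace α] [OrderClosedTopology α] {s : Set X}
    (hs : IsPreconnected s) {f g : X → α} (hf : ContinuousOn f s) (hg : ContinuousOn g s)
    (hfg : ∀ y ∈ s, f y ≠ g y) : (∀ y ∈ s, f y < g y) ∨ ∀ y ∈ s, g y < f y := by
  by_contra! h
  obtain ⟨⟨y₁, hy₁, h₁⟩, ⟨y₂, hy₂, h₂⟩⟩ := h
  obtain ⟨y, hy, hfgy⟩ := hs.intermediate_value₂ hy₂ hy₁ hf hg h₂ h₁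
  exact hfg y hy hfgy

theorem IsClosed.exists_Ioo_subset_compl {S : Set ℝ} (hS : IsClosed S) {l r x : ℝ}
    (hl : l ∈ S) (hr : r ∈ S) (hx : x ∈ Icc l r) (hxS : x ∉ S) :
    ∃ u ∈ S, ∃ v ∈ S, l ≤ u ∧ v ≤ r ∧ x ∈ Ioo u v ∧ Ioo u v ⊆ Sᶜ := by
  have hL : IsCompact (S ∩ Icc l x) := isCompact_Icc.inter_left hS
  have hR : IsCompact (S ∩ Icc x r) := isCompact_Icc.inter_left hS
  obtain ⟨hu, hlu, hux⟩ := hL.sSup_mem ⟨l, hl, le_rfl, hx.1⟩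
  obtain ⟨hv, hxv, hvr⟩ := hR.sInf_mem ⟨r, hr, hx.2, le_rfl⟩
  refine ⟨_, hu, _, hv, hlu, hvr, ⟨hux.lt_of_ne fun h => hxS (h ▸ hu),
    hxv.lt_of_ne fun h => hxS (h ▸ hv)⟩, fun y hy hyS => ?_⟩
  rcases le_total y x with hyx | hxy
  · exact hy.1.not_ge (le_csSup hL.bddAbove ⟨hyS, hlu.trans hy.1.le, hyx⟩)
  · exact hy.2.not_ge (csInf_le hR.bddBelow ⟨hyS, hxy, hy.2.le.trans hvr⟩)

section Iterates

variable {f : ℝ → ℝ} {P x : ℝ}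

theorem iterate_mem_Ioc_of_forall_mem_Ioo (hPx : P < x) (h : ∀ y ∈ Ioc P x, f y ∈ Ioo P y)
    (n : ℕ) : f^[n] x ∈ Ioc P x :=
  (show MapsTo f (Ioc P x) (Ioc P x) from fun y hy => ⟨(h y hy).1, (h y hy).2.le.trans hy.2⟩)
    |>.iterate n ⟨hPx, le_rfl⟩

theorem tendsto_iterate_of_forall_mem_Ioo (hf : Continuous f) (hPx : P < x)
    (h : ∀ y ∈ Ioc P x, f y ∈ Ioo P y) : Tendsto (fun n => f^[n] x) atTop (𝓝 P) := by
  have hmem := iterate_mem_Ioc_of_forall_mem_Ioo hPx h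
  have hanti : Antitone fun n => f^[n] x := antitone_nat_of_succ_le fun n => by
    rw [iterate_succ_apply']
    exact (h _ (hmem n)).2.le
  have hbdd : BddBelow (range fun n => f^[n] x) :=
    ⟨P, forall_mem_range.2 fun n => (hmem n).1.le⟩
  have hlim := tendsto_atTop_ciInf hanti hbdd
  obtain hPL | hPL := (le_ciInf fun n => (hmem n).1.le : P ≤ ⨅ n, f^[n] x).lt_or_eq
  · exact absurd (isFixedPt_of_tendsto_iterate hlim hf.continuousAt).eq
      (h _ ⟨hPL, ciInf_le hbdd 0⟩).2.ne
  · rwa [← hPL] at hlim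

theorem exists_iterate_mem_Ioc {g : ℝ → ℝ} (hf : Continuous f) {t : ℝ} (ht : t ∈ Ioc P x)
    (h : ∀ y ∈ Ioc P x, f y ∈ Ioo P y) (hgf : ∀ y ∈ Ioc P x, g y < f y)
    (hg : MonotoneOn g (Ioc P x)) : ∃ m, f^[m] x ∈ Ioc (g t) t := by
  classical
  have hex : ∃ m, f^[m] x ≤ t :=
    ((tendsto_iterate_of_forall_mem_Ioo hf (ht.1.trans_le ht.2) h).eventually
      (eventually_lt_nhds ht.1)).exists.imp fun _ => le_of_lt
  refine ⟨Nat.find hex, ?_, Nat.find_spec hex⟩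
  by_cases hm : Nat.find hex = 0
  · rw [hm]
    exact (hgf t ht).trans (h t ht).2 |>.trans_le ht.2
  · have hjt : t < f^[Nat.find hex - 1] x := not_le.1 (Nat.find_min hex (Nat.sub_one_lt hm))
    have hjmem := iterate_mem_Ioc_of_forall_mem_Ioo (ht.1.trans_le ht.2) h (Nat.find hex - 1)
    rw [← Nat.succ_pred_eq_of_ne_zero hm, iterate_succ_apply']
    exact (hg ht hjmem hjt.le).trans_lt (hgf _ hjmem)

end Iterates

section Variation

variable {E : Type*} [PseudoEMetricSpace E] (f : ℝ → E) {b : ℕ → ℝ}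

theorem sum_eVariationOn_Icc_of_antitone (hb : Antitone b) (n : ℕ) :
    ∑ i ∈ Finset.range n, eVariationOn f (Icc (b (i + 1)) (b i)) =
      eVariationOn f (Icc (b n) (b 0)) := by
  induction n with
  | zero => simp [eVariationOn.subsingleton]
  | succ n ih =>
    rw [Finset.sum_range_succ, ih, add_comm]
    simpa using eVariationOn.Icc_add_Icc f (s := univ) (hb n.le_succ) (hb n.zero_le) trivial

theorem sum_eVariationOn_Icc_add_le_mul (hb : Antitone b) {P B : ℝ} (hP : ∀ i, P ≤ b i)
    (hB : b 0 ≤ B) (K n : ℕ) :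
    ∑ i ∈ Finset.range n, eVariationOn f (Icc (b (i + K)) (b i)) ≤
      K * eVariationOn f (Icc P B) := by
  have hshift : ∀ j, Antitone fun i => b (j + i) := fun j _ _ h => hb (by omega)
  calc ∑ i ∈ Finset.range n, eVariationOn f (Icc (b (i + K)) (b i))
      = ∑ i ∈ Finset.range n, ∑ j ∈ Finset.range K,
          eVariationOn f (Icc (b (i + (j + 1))) (b (i + j))) :=
        Finset.sum_congr rfl fun i _ => (sum_eVariationOn_Icc_of_antitone f (hshift i) K).symm
    _ = ∑ j ∈ Finset.range K, ∑ i ∈ Finset.range n,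
          eVariationOn f (Icc (b (j + (i + 1))) (b (j + i))) := by
        rw [Finset.sum_comm]
        refine Finset.sum_congr rfl fun j _ => Finset.sum_congr rfl fun i _ => ?_
        rw [show i + (j + 1) = j + (i + 1) by omega, add_comm i j]
    _ ≤ ∑ _j ∈ Finset.range K, eVariationOn f (Icc P B) := by
        refine Finset.sum_le_sum fun j _ => ?_
        rw [sum_eVariationOn_Icc_of_antitone f (hshift j)]
        exact eVariationOn.mono f (Icc_subset_Icc (hP _) ((hb j.zero_le).trans hB))
    _ = K * eVariationOn f (Icc P B) := by simp

end Variation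

namespace C1Diffeo

instance : CoeFun C1Diffeo (fun _ => ℝ → ℝ) := ⟨C1Diffeo.toFun⟩

variable (f : C1Diffeo) {x : ℝ}

theorem apply_eq_self_of_notMem_Ioo (hx : x ∉ Ioo (0:ℝ) 1) : f x = x := by
  by_cases hx' : x ∈ Icc (0:ℝ) 1
  · obtain rfl | rfl : x = 0 ∨ x = 1 := by
      simp only [mem_Ioo, mem_Icc] at hx hx'
      by_contra!
      exact hx ⟨hx'.1.lt_of_ne' this.1, hx'.2.lt_of_ne this.2⟩
    exacts [f.map_zero, f.map_one]
  · exact f.fixes_outside x hx'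

theorem mem_Ioo_of_apply_ne (hx : f x ≠ x) : x ∈ Ioo (0:ℝ) 1 := by
  by_contra h
  exact hx (f.apply_eq_self_of_notMem_Ioo h)

theorem continuousOn : ContinuousOn f (Icc 0 1) := fun x hx =>
  (f.hasDeriv x hx).continuousWithinAt

theorem continuous : Continuous f := by
  have hid : ∀ s ⊆ (Ioo (0:ℝ) 1)ᶜ, ContinuousOn f s := fun s hs =>
    continuousOn_id.congr fun x hx => f.apply_eq_self_of_notMem_Ioo (hs hx)
  have hIic : ContinuousOn f (Iic 1) := by
    rw [← Iic_union_Icc_eq_Iic zero_le_one]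
    exact (hid _ fun x hx h => h.1.not_ge hx).union_of_isClosed f.continuousOn isClosed_Iic
      isClosed_Icc
  rw [← continuousOn_univ, ← Iic_union_Ici (a := (1:ℝ))]
  exact hIic.union_of_isClosed (hid _ fun x hx h => h.2.not_ge hx) isClosed_Iic isClosed_Ici

theorem hasDerivAt (hx : x ∈ Ioo (0:ℝ) 1) : HasDerivAt f (f.derivFun x) x :=
  (f.hasDeriv x (Ioo_subset_Icc_self hx)).hasDerivAt (Icc_mem_nhds hx.1 hx.2)

theorem strictMonoOn : StrictMonoOn f (Icc 0 1) := by
  refine strictMonoOn_of_deriv_pos (convex_Icc 0 1) f.continuousOn fun x hx => ?_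
  rw [interior_Icc] at hx
  rw [(f.hasDerivAt hx).deriv]
  exact f.derivFun_pos x (Ioo_subset_Icc_self hx)

end C1Diffeo

theorem bijOn_one_sub : BijOn (fun x : ℝ => 1 - x) (Icc 0 1) (Icc 0 1) :=
  ⟨fun x hx => ⟨by linarith [hx.2], by linarith [hx.1]⟩, fun x _ y _ h => by simpa using h,
    fun y hy => ⟨1 - y, ⟨by linarith [hy.2], by linarith [hy.1]⟩, sub_sub_cancel 1 y⟩⟩

/-- Conjugation by the reflection `x ↦ 1 - x` of `[0,1]`. -/
def C1bvDiffeo.reflect (f : C1bvDiffeo) : C1bvDiffeo where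
  toFun x := 1 - f.toFun (1 - x)
  derivFun x := f.derivFun (1 - x)
  map_zero := by simp [f.map_one]
  map_one := by simp [f.map_zero]
  fixes_outside x hx := by
    rw [f.fixes_outside (1 - x) fun h => hx ⟨by linarith [h.2], by linarith [h.1]⟩,
      sub_sub_cancel]
  bijOn := (bijOn_one_sub.comp f.bijOn).comp bijOn_one_sub
  hasDeriv x hx := by
    simpa using ((f.hasDeriv _ (bijOn_one_sub.mapsTo hx)).comp x
      ((hasDerivWithinAt_id x _).const_sub 1) bijOn_one_sub.mapsTo).const_sub 1
  derivFun_cont := f.derivFun_cont.comp (continuousOn_const.sub continuousOn_id)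
    bijOn_one_sub.mapsTo
  derivFun_pos x hx := f.derivFun_pos _ (bijOn_one_sub.mapsTo hx)
  logDeriv_bv := ne_top_of_le_ne_top f.logDeriv_bv <|
    eVariationOn.comp_le_of_antitoneOn _ _ (fun _ _ _ _ h => sub_le_sub_left h 1)
      bijOn_one_sub.mapsTo

structure IsSupportComponent (f : ℝ → ℝ) (u v : ℝ) : Prop where
  nonneg : 0 ≤ u
  lt : u < v
  le_one : v ≤ 1
  isFixedPt_left : IsFixedPt f u
  isFixedPt_right : IsFixedPt f v
  not_isFixedPt : ∀ y ∈ Ioo u v, ¬IsFixedPt f y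

structure C1bvAction (G : Type*) [AddCommGroup G] where
  elt : G → C1bvDiffeo
  elt_add : ∀ a b x, (elt (a + b)).toFun x = (elt a).toFun ((elt b).toFun x)
  elt_zero : ∀ x, (elt 0).toFun x = x

def ZdAction1bv.toC1bvAction {d : ℕ} (ρ : ZdAction1bv d) : C1bvAction (Fin d → ℤ) :=
  ⟨ρ.elt, ρ.elt_add, ρ.elt_zero⟩

namespace C1bvAction

variable {G : Type*} [AddCommGroup G]

section Basic

variable (ρ : C1bvAction G)

@[coe] def toFun (a : G) : ℝ → ℝ := (ρ.elt a).toFun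

instance : CoeFun (C1bvAction G) (fun _ => G → ℝ → ℝ) := ⟨toFun⟩

def derivFun (a : G) : ℝ → ℝ := (ρ.elt a).derivFun

def IsParabolicGlobalFixedPt (p : ℝ) : Prop :=
  (∀ a, IsFixedPt (ρ a) p) ∧ ∀ a, ρ.derivFun a p = 1

def reflect : C1bvAction G where
  elt a := (ρ.elt a).reflect
  elt_add a b x := by
    show 1 - (ρ.elt (a + b)).toFun (1 - x)
      = 1 - (ρ.elt a).toFun (1 - (1 - (ρ.elt b).toFun (1 - x)))
    rw [sub_sub_cancel, ρ.elt_add]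
  elt_zero x := by
    show 1 - _ = x
    rw [ρ.elt_zero, sub_sub_cancel]

theorem reflect_apply (a : G) (x : ℝ) : ρ.reflect a x = 1 - ρ a (1 - x) := rfl

variable {ρ} (a b : G) {x : ℝ}

theorem map_add_apply (x : ℝ) : ρ (a + b) x = ρ a (ρ b x) := ρ.elt_add a b x

theorem map_zero_apply (x : ℝ) : ρ 0 x = x := ρ.elt_zero x

theorem neg_apply_apply (x : ℝ) : ρ (-a) (ρ a x) = x := by
  rw [← map_add_apply, neg_add_cancel, map_zero_apply]

theorem apply_neg_apply (x : ℝ) : ρ a (ρ (-a) x) = x := by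
  simpa using neg_apply_apply (ρ := ρ) (-a) x

theorem commute : Function.Commute (ρ a) (ρ b) := fun x => by
  rw [← map_add_apply, add_comm, map_add_apply]

theorem map_nsmul (n : ℕ) : ρ (n • a) = (ρ a)^[n] := by
  induction n with
  | zero => funext x; simpa using map_zero_apply x
  | succ n ih => funext x; rw [succ_nsmul, map_add_apply, ih, iterate_succ_apply]

theorem continuous : Continuous (ρ a) := (ρ.elt a).toC1Diffeo.continuous

theorem strictMonoOn : StrictMonoOn (ρ a) (Icc 0 1) := (ρ.elt a).toC1Diffeo.strictMonoOn

theorem mapsTo : MapsTo (ρ a) (Icc 0 1) (Icc 0 1) := (ρ.elt a).bijOn.mapsTo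

theorem mem_Ioo_of_apply_ne (h : ρ a x ≠ x) : x ∈ Ioo (0:ℝ) 1 :=
  (ρ.elt a).toC1Diffeo.mem_Ioo_of_apply_ne h

theorem isFixedPt_zero : IsFixedPt (ρ a) 0 := (ρ.elt a).map_zero

theorem isFixedPt_one : IsFixedPt (ρ a) 1 := (ρ.elt a).map_one

theorem hasDerivWithinAt (hx : x ∈ Icc (0:ℝ) 1) :
    HasDerivWithinAt (ρ a) (ρ.derivFun a x) (Icc 0 1) x := (ρ.elt a).hasDeriv x hx

theorem hasDerivAt (hx : x ∈ Ioo (0:ℝ) 1) : HasDerivAt (ρ a) (ρ.derivFun a x) x :=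
  (ρ.elt a).toC1Diffeo.hasDerivAt hx

theorem derivFun_pos (hx : x ∈ Icc (0:ℝ) 1) : 0 < ρ.derivFun a x :=
  (ρ.elt a).derivFun_pos x hx

theorem continuousOn_derivFun : ContinuousOn (ρ.derivFun a) (Icc 0 1) :=
  (ρ.elt a).derivFun_cont

theorem boundedVariationOn_log_derivFun :
    BoundedVariationOn (fun x => Real.log (ρ.derivFun a x)) (Icc 0 1) := (ρ.elt a).logDeriv_bv

variable {a b}

theorem isFixedPt_neg (h : IsFixedPt (ρ a) x) : IsFixedPt (ρ (-a)) x := by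
  rw [IsFixedPt, ← h, neg_apply_apply, h]

theorem isFixedPt_nsmul (h : IsFixedPt (ρ a) x) (n : ℕ) : IsFixedPt (ρ (n • a)) x := by
  rw [map_nsmul]; exact h.iterate n

theorem isFixedPt_apply (h : IsFixedPt (ρ a) x) : IsFixedPt (ρ a) (ρ b x) :=
  h.map (commute b a)

theorem lt_iff_lt {y : ℝ} (hx : x ∈ Icc (0:ℝ) 1) (hy : y ∈ Icc (0:ℝ) 1) :
    ρ a x < ρ a y ↔ x < y :=
  (ρ.strictMonoOn a).lt_iff_lt hx hy

theorem le_iff_le {y : ℝ} (hx : x ∈ Icc (0:ℝ) 1) (hy : y ∈ Icc (0:ℝ) 1) :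
    ρ a x ≤ ρ a y ↔ x ≤ y :=
  (ρ.strictMonoOn a).le_iff_le hx hy

theorem derivFun_add (hx : x ∈ Icc (0:ℝ) 1) :
    ρ.derivFun (a + b) x = ρ.derivFun a (ρ b x) * ρ.derivFun b x := by
  refine (uniqueDiffOn_Icc_zero_one x hx).eq_deriv _ (ρ.hasDerivWithinAt (a + b) hx) ?_
  rw [show ρ (a + b) = ρ a ∘ ρ b from funext (map_add_apply a b)]
  exact (ρ.hasDerivWithinAt a (ρ.mapsTo b hx)).comp x (ρ.hasDerivWithinAt b hx) (ρ.mapsTo b)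

theorem derivFun_zero (hx : x ∈ Icc (0:ℝ) 1) : ρ.derivFun 0 x = 1 := by
  refine (uniqueDiffOn_Icc_zero_one x hx).eq_deriv _ (ρ.hasDerivWithinAt 0 hx) ?_
  rw [show ρ 0 = id from funext map_zero_apply]
  exact hasDerivWithinAt_id x _

theorem derivFun_nsmul (hx : x ∈ Icc (0:ℝ) 1) (n : ℕ) :
    ρ.derivFun (n • a) x = ∏ i ∈ Finset.range n, ρ.derivFun a ((ρ a)^[i] x) := by
  induction n with
  | zero => simpa using derivFun_zero hx
  | succ n ih =>
    rw [Finset.prod_range_succ, ← ih, succ_nsmul', derivFun_add hx, map_nsmul, mul_comm]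

theorem derivFun_nsmul_of_isFixedPt (h : IsFixedPt (ρ a) x) (hx : x ∈ Icc (0:ℝ) 1) (n : ℕ) :
    ρ.derivFun (n • a) x = ρ.derivFun a x ^ n := by
  simp [derivFun_nsmul hx, iterate_fixed h]

theorem derivFun_neg_of_isFixedPt (h : IsFixedPt (ρ a) x) (hx : x ∈ Icc (0:ℝ) 1) :
    ρ.derivFun (-a) x = (ρ.derivFun a x)⁻¹ := by
  have := derivFun_add (ρ := ρ) (a := -a) (b := a) hx
  rw [neg_add_cancel, derivFun_zero hx, h.eq] at this
  exact eq_inv_of_mul_eq_one_left this.symm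

end Basic

variable {ρ : C1bvAction G} {a b c e : G} {p r u v x y P A B : ℝ} {K : ℕ}

theorem lt_apply_of_isFixedPt (hcP : IsFixedPt (ρ c) P) (hP : 0 ≤ P) (hy : y ∈ Ioc P 1) :
    P < ρ c y := by
  conv_lhs => rw [← hcP.eq]
  exact ρ.strictMonoOn c ⟨hP, hy.1.le.trans hy.2⟩ ⟨hP.trans hy.1.le, hy.2⟩ hy.1

theorem mapsTo_Icc (hu : 0 ≤ u) (hv : v ≤ 1) (hau : IsFixedPt (ρ a) u)
    (hav : IsFixedPt (ρ a) v) : MapsTo (ρ a) (Icc u v) (Icc u v) := fun y hy => by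
  have hI : Icc u v ⊆ Icc 0 1 := Icc_subset_Icc hu hv
  have huv := hy.1.trans hy.2
  exact ⟨hau.eq ▸ (le_iff_le (hI ⟨le_rfl, huv⟩) (hI hy)).2 hy.1,
    hav.eq ▸ (le_iff_le (hI hy) (hI ⟨huv, le_rfl⟩)).2 hy.2⟩

theorem exists_isSupportComponent (hx : ¬IsFixedPt (ρ a) x) :
    ∃ u v, IsSupportComponent (ρ a) u v ∧ x ∈ Ioo u v := by
  obtain ⟨u, hu, v, hv, h0u, hv1, hxuv, hfree⟩ :=
    (isClosed_fixedPoints (ρ.continuous a)).exists_Ioo_subset_compl (isFixedPt_zero a)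
      (isFixedPt_one a) (Ioo_subset_Icc_self (mem_Ioo_of_apply_ne a hx)) hx
  exact ⟨u, v, ⟨h0u, hxuv.1.trans hxuv.2, hv1, hu, hv, hfree⟩, hxuv⟩

theorem exists_forall_lt_self (hu : 0 ≤ u) (hv : v ≤ 1)
    (hfree : ∀ y ∈ Ioo u v, ¬IsFixedPt (ρ c) y) :
    ∃ c', (c' = c ∨ c' = -c) ∧ ∀ y ∈ Ioo u v, ρ c' y < y := by
  have hI : Ioo u v ⊆ Icc 0 1 := Ioo_subset_Icc_self.trans (Icc_subset_Icc hu hv)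
  rcases isPreconnected_Ioo.forall_lt_or_forall_gt (ρ.continuous c).continuousOn
    continuousOn_id hfree with hlt | hgt
  · exact ⟨c, Or.inl rfl, hlt⟩
  · refine ⟨-c, Or.inr rfl, fun y hy => ?_⟩
    have := (lt_iff_lt (ρ := ρ) (a := -c) (hI hy) (ρ.mapsTo c (hI hy))).2 (hgt y hy)
    rwa [neg_apply_apply] at this

theorem log_derivFun_iterate_sub (hy : y ∈ Icc (0:ℝ) 1) (n : ℕ) :
    Real.log (ρ.derivFun e ((ρ c)^[n] y)) - Real.log (ρ.derivFun e y) =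
      ∑ i ∈ Finset.range n, (Real.log (ρ.derivFun c ((ρ c)^[i] (ρ e y))) -
        Real.log (ρ.derivFun c ((ρ c)^[i] y))) := by
  have hey := ρ.mapsTo e hy
  have hpos : ∀ {z}, z ∈ Icc (0:ℝ) 1 → ∀ i, ρ.derivFun c ((ρ c)^[i] z) ≠ 0 := fun hz i =>
    (derivFun_pos c ((ρ.mapsTo c).iterate i hz)).ne'
  have hcomm : ρ.derivFun e ((ρ c)^[n] y) * ∏ i ∈ Finset.range n, ρ.derivFun c ((ρ c)^[i] y)
      = (∏ i ∈ Finset.range n, ρ.derivFun c ((ρ c)^[i] (ρ e y))) * ρ.derivFun e y := by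
    rw [← derivFun_nsmul hy, ← derivFun_nsmul hey, ← map_nsmul, ← derivFun_add hy,
      ← derivFun_add hy, add_comm]
  have := congrArg Real.log hcomm
  rw [Real.log_mul (derivFun_pos e ((ρ.mapsTo c).iterate n hy)).ne'
      (Finset.prod_ne_zero_iff.2 fun i _ => hpos hy i),
    Real.log_mul (Finset.prod_ne_zero_iff.2 fun i _ => hpos hey i) (derivFun_pos e hy).ne',
    Real.log_prod fun i _ => hpos hy i, Real.log_prod fun i _ => hpos hey i] at this
  rw [Finset.sum_sub_distrib]
  linarith

theorem abs_log_derivFun_iterate_sub_le (hP : 0 ≤ P) (hPA : P < A) (hB : B ≤ 1)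
    (hcP : IsFixedPt (ρ c) P) (hc : ∀ z ∈ Ioc P B, ρ c z < z) (hK : (ρ c)^[K] B ≤ A)
    (hy : y ∈ Icc A B) (hey : ρ e y ∈ Icc A B) (n : ℕ) :
    |Real.log (ρ.derivFun e ((ρ c)^[n] y)) - Real.log (ρ.derivFun e y)| ≤
      K * (eVariationOn (fun z => Real.log (ρ.derivFun c z)) (Icc P B)).toReal := by
  set f := fun z => Real.log (ρ.derivFun c z)
  have hPB : Icc P B ⊆ Icc 0 1 := Icc_subset_Icc hP hB
  have hAB : Icc A B ⊆ Icc 0 1 := (Icc_subset_Icc hPA.le le_rfl).trans hPB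
  have hbv : ∀ s ⊆ Icc P B, BoundedVariationOn f s := fun s hs =>
    (boundedVariationOn_log_derivFun c).mono (hs.trans hPB)
  set b := fun i => (ρ c)^[i] B
  have hb : ∀ i, b i ∈ Ioc P B := iterate_mem_Ioc_of_forall_mem_Ioo (hPA.trans_le (hy.1.trans hy.2))
    fun z hz => ⟨lt_apply_of_isFixedPt hcP hP ⟨hz.1, hz.2.trans hB⟩, hc z hz⟩
  have hbI : ∀ i, b i ∈ Icc 0 1 := fun i => hPB ⟨(hb i).1.le, (hb i).2⟩
  have hanti : Antitone b := antitone_nat_of_succ_le fun i => by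
    simp only [b, iterate_succ_apply']
    exact (hc _ (hb i)).le
  have hmono : ∀ i {z w : ℝ}, z ∈ Icc (0:ℝ) 1 → w ∈ Icc (0:ℝ) 1 → z ≤ w →
      (ρ c)^[i] z ≤ (ρ c)^[i] w := fun i z w hz hw h => by
    rw [← map_nsmul]; exact (le_iff_le hz hw).2 h
  -- `cⁱ [A, B] ⊆ cⁱ [cᴷ B, B]`, and these intervals cover each point at most `K` times
  have hterm : ∀ i, ∀ z ∈ Icc A B, (ρ c)^[i] z ∈ Icc (b (i + K)) (b i) := fun i z hz =>
    ⟨by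
      show (ρ c)^[i + K] B ≤ _
      rw [iterate_add_apply]
      exact hmono i (hbI K) (hAB hz) (hK.trans hz.1),
      hmono i (hAB hz) (hbI 0) hz.2⟩
  have hsub : ∀ i, Icc (b (i + K)) (b i) ⊆ Icc P B := fun i =>
    Icc_subset_Icc (hb _).1.le (hb i).2
  rw [log_derivFun_iterate_sub (hAB hy) n]
  calc |∑ i ∈ Finset.range n, (f ((ρ c)^[i] (ρ e y)) - f ((ρ c)^[i] y))|
      ≤ ∑ i ∈ Finset.range n, |f ((ρ c)^[i] (ρ e y)) - f ((ρ c)^[i] y)| :=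
        Finset.abs_sum_le_sum_abs _ _
    _ ≤ ∑ i ∈ Finset.range n, (eVariationOn f (Icc (b (i + K)) (b i))).toReal :=
        Finset.sum_le_sum fun i _ => by
          rw [← Real.dist_eq]
          exact (hbv _ (hsub i)).dist_le (hterm i _ hey) (hterm i _ hy)
    _ = (∑ i ∈ Finset.range n, eVariationOn f (Icc (b (i + K)) (b i))).toReal :=
        (ENNReal.toReal_sum fun i _ => hbv _ (hsub i)).symm
    _ ≤ (K * eVariationOn f (Icc P B)).toReal :=
        ENNReal.toReal_mono (ENNReal.mul_ne_top (ENNReal.natCast_ne_top K) (hbv _ subset_rfl))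
          (sum_eVariationOn_Icc_add_le_mul f hanti (fun i => (hb i).1.le) le_rfl K n)
    _ = K * (eVariationOn f (Icc P B)).toReal := by simp

theorem abs_log_derivFun_sub_le (hP : 0 ≤ P) (hPA : P < A) (hB : B ≤ 1)
    (hcP : IsFixedPt (ρ c) P) (hc : ∀ z ∈ Ioc P B, ρ c z < z) (hK : (ρ c)^[K] B ≤ A)
    (hy : y ∈ Icc A B) (hey : ρ e y ∈ Icc A B) :
    |Real.log (ρ.derivFun e y) - Real.log (ρ.derivFun e P)| ≤
      K * (eVariationOn (fun z => Real.log (ρ.derivFun c z)) (Icc P B)).toReal := by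
  have hP1 : P ∈ Icc (0:ℝ) 1 := ⟨hP, (hPA.trans_le (hy.1.trans hy.2)).le.trans hB⟩
  have hyP : y ∈ Ioc P 1 := ⟨hPA.trans_le hy.1, hy.2.trans hB⟩
  have hlim : Tendsto (fun n => (ρ c)^[n] y) atTop (𝓝[Icc 0 1] P) := by
    refine tendsto_nhdsWithin_iff.2 ⟨tendsto_iterate_of_forall_mem_Ioo (ρ.continuous c) hyP.1
      fun z hz => ⟨lt_apply_of_isFixedPt hcP hP ⟨hz.1, hz.2.trans hyP.2⟩,
        hc z ⟨hz.1, hz.2.trans hy.2⟩⟩, .of_forall fun n => ?_⟩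
    exact (ρ.mapsTo c).iterate n ⟨hP.trans hyP.1.le, hyP.2⟩
  have hlog : ContinuousWithinAt (fun z => Real.log (ρ.derivFun e z)) (Icc 0 1) P :=
    (continuousOn_derivFun e P hP1).log (derivFun_pos e hP1).ne'
  rw [abs_sub_comm]
  exact le_of_tendsto' (((hlog.tendsto.comp hlim).sub_const _).abs)
    (abs_log_derivFun_iterate_sub_le hP hPA hB hcP hc hK hy hey)

theorem apply_left_le (hb : IsSupportComponent (ρ b) u v) (hx : x ∈ Ioo u v)
    (hax : IsFixedPt (ρ a) x) : ρ a u ≤ u := by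
  have hI : Icc u v ⊆ Icc 0 1 := Icc_subset_Icc hb.nonneg hb.le_one
  have hlt : ρ a u < x :=
    hax.eq ▸ (lt_iff_lt (hI ⟨le_rfl, hb.lt.le⟩) (hI (Ioo_subset_Icc_self hx))).2 hx.1
  by_contra! h
  exact hb.not_isFixedPt _ ⟨h, hlt.trans hx.2⟩ (isFixedPt_apply hb.isFixedPt_left)

theorem right_le_apply (hb : IsSupportComponent (ρ b) u v) (hx : x ∈ Ioo u v)
    (hax : IsFixedPt (ρ a) x) : v ≤ ρ a v := by
  have hI : Icc u v ⊆ Icc 0 1 := Icc_subset_Icc hb.nonneg hb.le_one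
  have hlt : x < ρ a v :=
    hax.eq ▸ (lt_iff_lt (hI (Ioo_subset_Icc_self hx)) (hI ⟨hb.lt.le, le_rfl⟩)).2 hx.2
  by_contra! h
  exact hb.not_isFixedPt _ ⟨hx.1.trans hlt, h⟩ (isFixedPt_apply hb.isFixedPt_right)

theorem isFixedPt_left_of_isFixedPt_mem (hb : IsSupportComponent (ρ b) u v) (hx : x ∈ Ioo u v)
    (hax : IsFixedPt (ρ a) x) : IsFixedPt (ρ a) u := by
  refine le_antisymm (apply_left_le hb hx hax) ?_
  have hu : u ∈ Icc (0:ℝ) 1 := ⟨hb.nonneg, hb.lt.le.trans hb.le_one⟩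
  have := (le_iff_le (ρ := ρ) (a := a) (ρ.mapsTo (-a) hu) hu).2
    (apply_left_le hb hx (isFixedPt_neg hax))
  rwa [apply_neg_apply] at this

theorem isFixedPt_right_of_isFixedPt_mem (hb : IsSupportComponent (ρ b) u v) (hx : x ∈ Ioo u v)
    (hax : IsFixedPt (ρ a) x) : IsFixedPt (ρ a) v := by
  refine le_antisymm ?_ (right_le_apply hb hx hax)
  have hv : v ∈ Icc (0:ℝ) 1 := ⟨hb.nonneg.trans hb.lt.le, hb.le_one⟩
  have := (le_iff_le (ρ := ρ) (a := a) hv (ρ.mapsTo (-a) hv)).2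
    (right_le_apply hb hx (isFixedPt_neg hax))
  rwa [apply_neg_apply] at this

theorem derivFun_eq_one_of_forall_lt_self {c₀ : ℝ} (hu : 0 ≤ u) (huc : u < c₀) (hc₀ : c₀ ≤ 1)
    (hcu : IsFixedPt (ρ c) u) (hc : ∀ y ∈ Ioc u c₀, ρ c y < y) (hau : IsFixedPt (ρ a) u)
    (hac : IsFixedPt (ρ a) c₀) : ρ.derivFun a u = 1 := by
  have hIoo : ∀ y ∈ Ioc u c₀, ρ c y ∈ Ioo u y := fun y hy =>
    ⟨lt_apply_of_isFixedPt hcu hu ⟨hy.1, hy.2.trans hc₀⟩, hc y hy⟩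
  have hmem := iterate_mem_Ioc_of_forall_mem_Ioo huc hIoo
  have hlim : Tendsto (fun n => (ρ c)^[n] c₀) atTop (𝓝[Icc 0 1 \ {u}] u) :=
    tendsto_nhdsWithin_iff.2 ⟨tendsto_iterate_of_forall_mem_Ioo (ρ.continuous c) huc hIoo,
      .of_forall fun n => ⟨⟨hu.trans (hmem n).1.le, (hmem n).2.trans hc₀⟩, (hmem n).1.ne'⟩⟩
  refine (ρ.hasDerivWithinAt a ⟨hu, huc.le.trans hc₀⟩).eq_one_of_frequently_isFixedPt hau
    (hlim.frequently (.of_forall fun n => ?_))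
  rw [← map_nsmul]
  exact isFixedPt_apply hac

theorem not_isSupportComponent_of_contraction {c₀ d₀ : ℝ} (hu : 0 ≤ u) (huc : u < c₀)
    (hcu : IsFixedPt (ρ c) u) (hc : ∀ y ∈ Ioc u d₀, ρ c y < y) (hcd : ρ c d₀ ≤ c₀)
    (hau : IsFixedPt (ρ a) u) : ¬IsSupportComponent (ρ a) c₀ d₀ := by
  intro ha
  have hu1 : u ∈ Icc (0:ℝ) 1 := ⟨hu, huc.le.trans (ha.lt.le.trans ha.le_one)⟩
  obtain ⟨a', ha', ha'lt⟩ := exists_forall_lt_self ha.nonneg ha.le_one ha.not_isFixedPt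
  have hfix : ∀ {w}, IsFixedPt (ρ a) w → IsFixedPt (ρ a') w := by
    rcases ha' with rfl | rfl
    exacts [id, isFixedPt_neg]
  have hc₀ := hfix ha.isFixedPt_left
  have hDa' : ρ.derivFun a' u = 1 :=
    derivFun_eq_one_of_forall_lt_self hu huc (ha.lt.le.trans ha.le_one) hcu
      (fun y hy => hc y ⟨hy.1, hy.2.trans ha.lt.le⟩) (hfix hau) hc₀
  -- the slopes of `a'ᵐ` on `[c₀, z]` tend to `0`, while distortion keeps `D (a'ᵐ)` away from `0`
  obtain ⟨z, hz⟩ := nonempty_Ioo.2 ha.lt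
  set V := (eVariationOn (fun y => Real.log (ρ.derivFun c y)) (Icc u d₀)).toReal
  have hslope : Tendsto (fun m => ((ρ a')^[m] z - c₀) / (z - c₀)) atTop (𝓝 0) := by
    have := tendsto_iterate_of_forall_mem_Ioo (ρ.continuous a') hz.1 fun y hy =>
      ⟨lt_apply_of_isFixedPt hc₀ ha.nonneg ⟨hy.1, hy.2.trans (hz.2.le.trans ha.le_one)⟩,
        ha'lt y ⟨hy.1, hy.2.trans_lt hz.2⟩⟩
    simpa using (this.sub_const c₀).div_const (z - c₀)
  obtain ⟨m, hm⟩ := (hslope.eventually (gt_mem_nhds (Real.exp_pos (-V)))).exists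
  have hI : Icc c₀ d₀ ⊆ Icc 0 1 := Icc_subset_Icc ha.nonneg ha.le_one
  obtain ⟨ξ, hξ, hξeq⟩ := exists_hasDerivAt_eq_slope (ρ (m • a')) (ρ.derivFun (m • a')) hz.1
    (ρ.continuous _).continuousOn fun w hw =>
      hasDerivAt _ ⟨ha.nonneg.trans_lt hw.1, hw.2.trans (hz.2.trans_le ha.le_one)⟩
  rw [isFixedPt_nsmul hc₀ m, map_nsmul] at hξeq
  have hξI : ξ ∈ Icc c₀ d₀ := ⟨hξ.1.le, hξ.2.le.trans hz.2.le⟩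
  have hdist := abs_log_derivFun_sub_le (K := 1) hu huc ha.le_one hcu hc (by simpa using hcd)
    hξI (mapsTo_Icc ha.nonneg ha.le_one (isFixedPt_nsmul hc₀ m)
      (isFixedPt_nsmul (hfix ha.isFixedPt_right) m) hξI)
  rw [derivFun_nsmul_of_isFixedPt (hfix hau) hu1, hDa', one_pow, Real.log_one, sub_zero,
    Nat.cast_one, one_mul] at hdist
  have hlow : Real.exp (-V) ≤ ρ.derivFun (m • a') ξ := by
    rw [← Real.exp_log (derivFun_pos _ (hI hξI))]
    exact Real.exp_le_exp.2 (neg_le_of_abs_le hdist)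
  linarith

/-- Kopell's lemma. -/
theorem Icc_subset_fixedPoints_of_isSupportComponent (hb : IsSupportComponent (ρ b) u v)
    (hx : x ∈ Ioo u v) (hax : IsFixedPt (ρ a) x) : Icc u v ⊆ fixedPoints (ρ a) := by
  have hau := isFixedPt_left_of_isFixedPt_mem hb hx hax
  have hav := isFixedPt_right_of_isFixedPt_mem hb hx hax
  obtain ⟨c, hc', hc⟩ := exists_forall_lt_self hb.nonneg hb.le_one hb.not_isFixedPt
  have hcu : IsFixedPt (ρ c) u := by
    rcases hc' with rfl | rfl
    exacts [hb.isFixedPt_left, isFixedPt_neg hb.isFixedPt_left]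
  intro z hz
  by_contra hza
  have hzu : u < z := hz.1.lt_of_ne fun h => hza (h ▸ hau)
  -- pushing `z` towards `u` by `c` gives a point of `(u, x)` moved by `a`
  obtain ⟨z', hz', hz'a⟩ : ∃ z' ∈ Ioo u x, ¬IsFixedPt (ρ a) z' := by
    have hIoo : ∀ y ∈ Ioc u z, ρ c y ∈ Ioo u y := fun y hy =>
      ⟨lt_apply_of_isFixedPt hcu hb.nonneg ⟨hy.1, hy.2.trans (hz.2.trans hb.le_one)⟩,
        hc y ⟨hy.1, hy.2.trans_lt (hz.2.lt_of_ne fun h => hza (h ▸ hav))⟩⟩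
    obtain ⟨n, hn⟩ := ((tendsto_iterate_of_forall_mem_Ioo (ρ.continuous c) hzu hIoo).eventually
      (eventually_lt_nhds hx.1)).exists
    refine ⟨_, ⟨(iterate_mem_Ioc_of_forall_mem_Ioo hzu hIoo n).1, hn⟩, fun h => hza ?_⟩
    rw [← map_nsmul] at h
    simpa [neg_apply_apply] using isFixedPt_apply (b := -(n • c)) h
  obtain ⟨c₀, d₀, ha, hz'cd⟩ := exists_isSupportComponent hz'a
  have hdx : d₀ ≤ x := by
    by_contra! h
    exact ha.not_isFixedPt x ⟨hz'cd.1.trans hz'.2, h⟩ hax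
  have hd₀ : d₀ ∈ Ioo u v := ⟨hz'.1.trans hz'cd.2, hdx.trans_lt hx.2⟩
  have hcd : ρ c d₀ ≤ c₀ := by
    by_contra! h
    exact ha.not_isFixedPt _ ⟨h, hc d₀ hd₀⟩ (isFixedPt_apply ha.isFixedPt_right)
  have hucd : u < ρ c d₀ :=
    lt_apply_of_isFixedPt hcu hb.nonneg ⟨hd₀.1, hd₀.2.le.trans hb.le_one⟩
  exact not_isSupportComponent_of_contraction hb.nonneg (hucd.trans_le hcd) hcu
    (fun y hy => hc y ⟨hy.1, hy.2.trans_lt hd₀.2⟩) hcd hau ha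

theorem exists_forall_apply_lt_apply (hp : 0 ≤ p) (hpr : p < r) (hr : r ≤ 1)
    (hap : IsFixedPt (ρ a) p) (hcp : IsFixedPt (ρ c) p)
    (hD : ρ.derivFun c p < ρ.derivFun a p) :
    ∃ x ∈ Ioo p r, ∀ y ∈ Ioc p x, ρ c y < ρ a y := by
  have hp1 : p ∈ Icc (0:ℝ) 1 := ⟨hp, hpr.le.trans hr⟩
  have hI : Icc (0:ℝ) 1 ∈ 𝓝[>] p := Icc_mem_nhdsGT_of_mem ⟨hp, hpr.trans_le hr⟩
  have hev : ∀ᶠ y in 𝓝[>] p, ρ c y < ρ a y :=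
    ((ρ.hasDerivWithinAt c hp1).mono_of_mem_nhdsWithin hI).eventually_lt
      ((ρ.hasDerivWithinAt a hp1).mono_of_mem_nhdsWithin hI) (hcp.eq.trans hap.eq.symm) hD
  obtain ⟨x', hx', hsub⟩ := mem_nhdsGT_iff_exists_Ioo_subset.1 (hev.and (Ioo_mem_nhdsGT hpr))
  have hx : (p + x') / 2 ∈ Ioo p x' :=
    ⟨by linarith [mem_Ioi.1 hx'], by linarith [mem_Ioi.1 hx']⟩
  exact ⟨_, (hsub hx).2, fun y hy => (hsub ⟨hy.1, hy.2.trans_lt hx.2⟩).1⟩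

theorem exists_derivFun_eq_inv_pow_apply_mem_Ioc (hp : 0 ≤ p) (hpx : p < x) (hx : x ≤ 1)
    (hap : IsFixedPt (ρ a) p) (hcp : IsFixedPt (ρ c) p) (hDa : ρ.derivFun a p = 1)
    (ha : ∀ y ∈ Ioc p x, ρ a y < y) (hca : ∀ y ∈ Ioc p x, ρ c y < ρ a y) (k : ℕ) :
    ∃ e, ρ.derivFun e p = (ρ.derivFun c p)⁻¹ ^ k ∧ ρ e x ∈ Ioc (ρ c x) x := by
  have hp1 : p ∈ Icc (0:ℝ) 1 := ⟨hp, hpx.le.trans hx⟩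
  have hI : Ioc p x ⊆ Icc 0 1 := fun y hy => ⟨hp.trans hy.1.le, hy.2.trans hx⟩
  have haIoo : ∀ y ∈ Ioc p x, ρ a y ∈ Ioo p y := fun y hy =>
    ⟨lt_apply_of_isFixedPt hap hp ⟨hy.1, hy.2.trans hx⟩, ha y hy⟩
  have hcIoo : ∀ y ∈ Ioc p x, ρ c y ∈ Ioo p y := fun y hy =>
    ⟨lt_apply_of_isFixedPt hcp hp ⟨hy.1, hy.2.trans hx⟩, (hca y hy).trans (ha y hy)⟩
  have hcx := hcIoo x ⟨hpx, le_rfl⟩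
  have hck : (ρ c)^[k] x ∈ Ioc p x := iterate_mem_Ioc_of_forall_mem_Ioo hpx hcIoo k
  -- `aᵐ x` is caught between `cᵏ⁺¹ x` and `cᵏ x`, so `c⁻ᵏ aᵐ` moves `x` into `(c x, x]`
  obtain ⟨m, hm₁, hm₂⟩ := exists_iterate_mem_Ioc (ρ.continuous a) hck haIoo hca
    ((ρ.strictMonoOn c).monotoneOn.mono hI)
  have hmI : (ρ a)^[m] x ∈ Icc (0:ℝ) 1 := hI (iterate_mem_Ioc_of_forall_mem_Ioo hpx haIoo m)
  have hcinv : ∀ y, ρ (k • -c) ((ρ c)^[k] y) = y := fun y => by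
    rw [← map_nsmul, smul_neg, neg_apply_apply]
  refine ⟨k • -c + m • a, ?_, ?_⟩
  · rw [derivFun_add hp1, (isFixedPt_nsmul hap m).eq, derivFun_nsmul_of_isFixedPt hap hp1, hDa,
      one_pow, mul_one, derivFun_nsmul_of_isFixedPt (isFixedPt_neg hcp) hp1,
      derivFun_neg_of_isFixedPt hcp hp1]
  · rw [map_add_apply, map_nsmul a]
    constructor
    · have := (lt_iff_lt (ρ := ρ) (a := k • -c) ((ρ.mapsTo c).iterate k (hI ⟨hcx.1, hcx.2.le⟩))
        hmI).2 (by rwa [← iterate_succ_apply' (ρ c), iterate_succ_apply] at hm₁)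
      rwa [hcinv] at this
    · have := (le_iff_le (ρ := ρ) (a := k • -c) hmI (hI hck)).2 hm₂
      rwa [hcinv] at this

theorem log_derivFun_le_of_apply_mem_Ioc (hp : 0 ≤ p) (hpx : p < x) (hx : x ≤ 1)
    (hcp : IsFixedPt (ρ c) p) (hc : ∀ y ∈ Ioc p x, ρ c y ∈ Ioo p y)
    (hex : ρ e x ∈ Ioc (ρ c x) x) :
    Real.log (ρ.derivFun e p) ≤ Real.log ((x - ρ c (ρ c x)) / (x - ρ c x)) +
      2 * (eVariationOn (fun y => Real.log (ρ.derivFun c y)) (Icc p x)).toReal := by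
  have hcx := hc x ⟨hpx, le_rfl⟩
  have hc2x := hc _ ⟨hcx.1, hcx.2.le⟩
  have hI : Icc (ρ c x) x ⊆ Icc 0 1 := Icc_subset_Icc (hp.trans hcx.1.le) hx
  have hecx : ρ c (ρ c x) < ρ e (ρ c x) := by
    rw [(commute (ρ := ρ) e c).eq x]
    exact (lt_iff_lt (hI ⟨le_rfl, hcx.2.le⟩) (hI ⟨hex.1.le, hex.2⟩)).2 hex.1
  -- `e` maps `[c x, x]` into `[c² x, x]`
  obtain ⟨ξ, hξ, hξeq⟩ := exists_hasDerivAt_eq_slope (ρ e) (ρ.derivFun e) hcx.2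
    (ρ.continuous e).continuousOn fun w hw =>
      hasDerivAt e ⟨hp.trans_lt (hcx.1.trans hw.1), hw.2.trans_le hx⟩
  have hξI : ξ ∈ Icc (ρ c x) x := Ioo_subset_Icc_self hξ
  have hupper : ρ.derivFun e ξ ≤ (x - ρ c (ρ c x)) / (x - ρ c x) := by
    rw [hξeq]
    exact div_le_div_of_nonneg_right (by linarith [hex.2]) (by linarith [hcx.2])
  have heξ : ρ e ξ ∈ Icc (ρ c (ρ c x)) x :=
    ⟨hecx.le.trans ((le_iff_le (hI ⟨le_rfl, hcx.2.le⟩) (hI hξI)).2 hξI.1),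
      ((le_iff_le (hI hξI) (hI ⟨hcx.2.le, le_rfl⟩)).2 hξI.2).trans hex.2⟩
  have hdist := abs_log_derivFun_sub_le (K := 2) hp hc2x.1 hx hcp
    (fun y hy => (hc y hy).2) le_rfl ⟨hc2x.2.le.trans hξI.1, hξI.2⟩ heξ
  push_cast at hdist
  linarith [(abs_le.1 hdist).1, Real.log_le_log (derivFun_pos e (hI hξI)) hupper]

theorem not_forall_lt_self_of_hyperbolic (hp : 0 ≤ p) (hpr : p < r) (hr : r ≤ 1)
    (hap : IsFixedPt (ρ a) p) (hcp : IsFixedPt (ρ c) p) (hDa : ρ.derivFun a p = 1)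
    (hDc : ρ.derivFun c p < 1) : ¬∀ y ∈ Ioo p r, ρ a y < y := by
  intro ha
  have hp1 : p ∈ Icc (0:ℝ) 1 := ⟨hp, hpr.le.trans hr⟩
  obtain ⟨x, hx, hca⟩ := exists_forall_apply_lt_apply hp hpr hr hap hcp (hDa ▸ hDc)
  have hx1 : x ≤ 1 := hx.2.le.trans hr
  have ha' : ∀ y ∈ Ioc p x, ρ a y < y := fun y hy => ha y ⟨hy.1, hy.2.trans_lt hx.2⟩
  have hcIoo : ∀ y ∈ Ioc p x, ρ c y ∈ Ioo p y := fun y hy =>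
    ⟨lt_apply_of_isFixedPt hcp hp ⟨hy.1, hy.2.trans hx1⟩, (hca y hy).trans (ha' y hy)⟩
  set M := Real.log ((x - ρ c (ρ c x)) / (x - ρ c x)) +
    2 * (eVariationOn (fun y => Real.log (ρ.derivFun c y)) (Icc p x)).toReal
  -- the expansion `(D c (p))⁻ᵏ` at `p` of the element `e` below exceeds `exp M` for large `k`
  have hL : 0 < Real.log (ρ.derivFun c p)⁻¹ :=
    Real.log_pos ((one_lt_inv₀ (derivFun_pos c hp1)).2 hDc)
  obtain ⟨k, hk⟩ := exists_nat_gt (M / Real.log (ρ.derivFun c p)⁻¹)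
  rw [div_lt_iff₀ hL] at hk
  obtain ⟨e, hDe, hex⟩ :=
    exists_derivFun_eq_inv_pow_apply_mem_Ioc hp hx.1 hx1 hap hcp hDa ha' hca k
  have := log_derivFun_le_of_apply_mem_Ioc hp hx.1 hx1 hcp hcIoo hex
  rw [hDe, Real.log_pow] at this
  linarith

theorem exists_isSupportComponent_of_derivFun_ne_one (hp : 0 ≤ p) (hp1 : p < 1)
    (hcp : IsFixedPt (ρ c) p) (hDc : ρ.derivFun c p ≠ 1) :
    ∃ v, IsSupportComponent (ρ c) p v := by
  have hpI : p ∈ Icc (0:ℝ) 1 := ⟨hp, hp1.le⟩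
  have hev : ∀ᶠ y in 𝓝[>] p, ¬IsFixedPt (ρ c) y := by
    have h : ¬∃ᶠ y in 𝓝[Icc 0 1 \ {p}] p, IsFixedPt (ρ c) y := fun h =>
      hDc ((ρ.hasDerivWithinAt c hpI).eq_one_of_frequently_isFixedPt hcp h)
    refine nhdsWithin_le_of_mem ?_ (not_frequently.1 h)
    exact mem_of_superset (Ioo_mem_nhdsGT hp1) fun y hy =>
      ⟨⟨hp.trans hy.1.le, hy.2.le⟩, hy.1.ne'⟩
  obtain ⟨q, hq, hsub⟩ := mem_nhdsGT_iff_exists_Ioo_subset.1 (hev.and (Ioo_mem_nhdsGT hp1))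
  have hy : (p + q) / 2 ∈ Ioo p q := ⟨by linarith [mem_Ioi.1 hq], by linarith [mem_Ioi.1 hq]⟩
  obtain ⟨u, v, hc, hyuv⟩ := exists_isSupportComponent (hsub hy).1
  have hup : u = p := le_antisymm
    (not_lt.1 fun h => (hsub ⟨h, hyuv.1.trans hy.2⟩).1 hc.isFixedPt_left)
    (not_lt.1 fun h => hc.not_isFixedPt p ⟨h, hy.1.trans hyuv.2⟩ hcp)
  exact ⟨v, hup ▸ hc⟩

theorem isParabolicGlobalFixedPt_of_not_Icc_subset (hp : 0 ≤ p) (hp1 : p < 1)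
    (hap : IsFixedPt (ρ a) p) (hDa : ρ.derivFun a p = 1)
    (hmoved : ∀ w, p < w → ¬Icc p w ⊆ fixedPoints (ρ a)) : ρ.IsParabolicGlobalFixedPt p := by
  have hpI : p ∈ Icc (0:ℝ) 1 := ⟨hp, hp1.le⟩
  have hfix : ∀ e, IsFixedPt (ρ e) p := fun e => by
    by_contra hep
    obtain ⟨u, v, he, hpuv⟩ := exists_isSupportComponent hep
    exact hmoved v hpuv.2 ((Icc_subset_Icc_left hpuv.1.le).trans
      (Icc_subset_fixedPoints_of_isSupportComponent he hpuv hap))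
  refine ⟨hfix, fun c => ?_⟩
  by_contra hDc
  obtain ⟨v, hc⟩ := exists_isSupportComponent_of_derivFun_ne_one hp hp1 (hfix c) hDc
  by_cases h : ∃ y ∈ Ioo p v, IsFixedPt (ρ a) y
  · obtain ⟨y, hy, hay⟩ := h
    exact hmoved v hc.lt (Icc_subset_fixedPoints_of_isSupportComponent hc hy hay)
  push Not at h
  obtain ⟨a', ha', ha'lt⟩ := exists_forall_lt_self hp hc.le_one h
  have ha'p : IsFixedPt (ρ a') p ∧ ρ.derivFun a' p = 1 := by
    rcases ha' with rfl | rfl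
    · exact ⟨hap, hDa⟩
    · exact ⟨isFixedPt_neg hap, by rw [derivFun_neg_of_isFixedPt hap hpI, hDa, inv_one]⟩
  obtain ⟨c', hc'p, hDc'⟩ : ∃ c', IsFixedPt (ρ c') p ∧ ρ.derivFun c' p < 1 := by
    rcases lt_or_gt_of_ne hDc with hlt | hgt
    · exact ⟨c, hfix c, hlt⟩
    · exact ⟨-c, isFixedPt_neg (hfix c), by
        rw [derivFun_neg_of_isFixedPt (hfix c) hpI]; exact inv_lt_one_of_one_lt₀ hgt⟩
  exact not_forall_lt_self_of_hyperbolic hp hc.lt hc.le_one ha'p.1 hc'p ha'p.2 hDc' ha'lt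

theorem Icc_subset_fixedPoints_of_isFixedPt
    (hnp : ∀ p ∈ Ioo (0:ℝ) 1, ¬ρ.IsParabolicGlobalFixedPt p)
    (hax : IsFixedPt (ρ a) x) (hbx : ¬IsFixedPt (ρ b) x) : Icc x 1 ⊆ fixedPoints (ρ a) := by
  obtain ⟨u, v, hb, hx⟩ := exists_isSupportComponent hbx
  have huv := Icc_subset_fixedPoints_of_isSupportComponent hb hx hax
  by_contra hsub
  -- `p` is the first point to the right of `x` moved by `a`
  set S := Ici x ∩ (fixedPoints (ρ a))ᶜ
  have hSne : S.Nonempty := by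
    obtain ⟨y, hy, hya⟩ := not_subset.1 hsub
    exact ⟨y, hy.1, hya⟩
  have hbdd : BddBelow S := ⟨x, fun y hy => hy.1⟩
  set p := sInf S
  have hxp : x < p := hx.2.trans_le <| le_csInf hSne fun y hy =>
    not_lt.1 fun hyv => hy.2 (huv ⟨hx.1.le.trans hy.1, hyv.le⟩)
  have hIcc : Icc x p ⊆ fixedPoints (ρ a) := by
    rw [← closure_Ico hxp.ne]
    refine (isClosed_fixedPoints (ρ.continuous a)).closure_subset_iff.2 fun y hy => ?_
    by_contra h
    exact notMem_of_lt_csInf hy.2 hbdd ⟨hy.1, h⟩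
  have hp1 : p < 1 := by
    obtain ⟨y, hy⟩ := hSne
    exact (csInf_le hbdd hy).trans_lt (mem_Ioo_of_apply_ne a hy.2).2
  have hp0 : 0 < p := (hb.nonneg.trans_lt hx.1).trans hxp
  have hDa : ρ.derivFun a p = 1 := by
    have hfreq : ∃ᶠ y in 𝓝[<] p, IsFixedPt (ρ a) y := Eventually.frequently <|
      mem_of_superset (Ioo_mem_nhdsLT hxp) fun y hy => hIcc ⟨hy.1.le, hy.2.le⟩
    refine (ρ.hasDerivWithinAt a ⟨hp0.le, hp1.le⟩).eq_one_of_frequently_isFixedPt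
      (hIcc ⟨hxp.le, le_rfl⟩) (hfreq.filter_mono (nhdsWithin_le_of_mem ?_))
    exact mem_of_superset (Ioo_mem_nhdsLT hp0) fun y hy =>
      ⟨⟨hy.1.le, hy.2.le.trans hp1.le⟩, hy.2.ne⟩
  refine hnp p ⟨hp0, hp1⟩ (isParabolicGlobalFixedPt_of_not_Icc_subset hp0.le hp1
    (hIcc ⟨hxp.le, le_rfl⟩) hDa fun w hw h => ?_)
  obtain ⟨y, hyS, hyw⟩ := exists_lt_of_csInf_lt hSne hw
  exact hyS.2 (h ⟨csInf_le hbdd hyS, hyw.le⟩)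

theorem IsParabolicGlobalFixedPt.of_reflect (h : ρ.reflect.IsParabolicGlobalFixedPt p) :
    ρ.IsParabolicGlobalFixedPt (1 - p) := by
  refine ⟨fun a => ?_, h.2⟩
  have := (h.1 a).eq
  rw [reflect_apply] at this
  rw [IsFixedPt]
  linarith

theorem fixedPoints_subset (hnp : ∀ p ∈ Ioo (0:ℝ) 1, ¬ρ.IsParabolicGlobalFixedPt p)
    (ha : ∃ w, ρ a w ≠ w) : fixedPoints (ρ a) ⊆ fixedPoints (ρ b) := by
  intro x hax
  by_contra hbx
  obtain ⟨w, hw⟩ := ha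
  have hx := mem_Ioo_of_apply_ne b hbx
  have hw01 := mem_Ioo_of_apply_ne a hw
  rcases le_total x w with hxw | hwx
  · exact hw (Icc_subset_fixedPoints_of_isFixedPt hnp hax hbx ⟨hxw, hw01.2.le⟩)
  · have hnp' : ∀ p ∈ Ioo (0:ℝ) 1, ¬ρ.reflect.IsParabolicGlobalFixedPt p := fun p hp h =>
      hnp (1 - p) ⟨by linarith [hp.2], by linarith [hp.1]⟩ h.of_reflect
    have hax' : IsFixedPt (ρ.reflect a) (1 - x) := by
      rw [IsFixedPt, reflect_apply, sub_sub_cancel, hax.eq]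
    have hbx' : ¬IsFixedPt (ρ.reflect b) (1 - x) := by
      rw [IsFixedPt, reflect_apply, sub_sub_cancel]
      exact fun h => hbx (show ρ b x = x by linarith)
    have := Icc_subset_fixedPoints_of_isFixedPt hnp' hax' hbx'
      (show 1 - w ∈ Icc (1 - x) 1 from ⟨by linarith, by linarith [hw01.1]⟩)
    rw [mem_fixedPoints, IsFixedPt, reflect_apply, sub_sub_cancel] at this
    exact hw (by linarith)

end C1bvAction

/-- If a `C^{1+bv}` action of `ℤᵈ` on `[0,1]` has no parabolic global fixed point in the open
interval `(0,1)`, then all the elements of its image group other than the identity have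
exactly the same set of fixed points. -/
theorem same_fixed_points_of_no_interior_parabolic_global_fixed_point (d : ℕ)
    (ρ : ZdAction1bv d)
    (hnp : ∀ p ∈ Ioo (0:ℝ) 1,
      ¬ ((∀ a : Fin d → ℤ, (ρ.elt a).toFun p = p) ∧
         (∀ a : Fin d → ℤ, (ρ.elt a).derivFun p = 1))) :
    ∀ a b : Fin d → ℤ,
      (∃ x : ℝ, (ρ.elt a).toFun x ≠ x) → (∃ x : ℝ, (ρ.elt b).toFun x ≠ x) →
      {x : ℝ | (ρ.elt a).toFun x = x} = {x : ℝ | (ρ.elt b).toFun x = x} := fun _ _ ha hb =>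
  (C1bvAction.fixedPoints_subset (ρ := ρ.toC1bvAction) hnp ha).antisymm
    (C1bvAction.fixedPoints_subset hnp hb)
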